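/- Let G = (V,E) be a finite simple graph, let k > 0 be a natural number, and let u ∈ V be a vertex such that for every vertex v ∈ V ∖ N[u] one has ω(G[N(u)]) − k > ω(G[N(v)]). Then θ(G,k) = θ(G[V ∖ {u}], k − 1). -/

import Mathlib

/-!
If an optimal deletion set `S` avoids `u`, replace it by `u` together with all but at most one
vertex of `S`. A surviving clique `K ⊆ N(u)` meets `S` in at most one vertex, and `(K ∖ S) ∪ {u}`
is a clique of `G - S`, so `|K| ≤ ω(G - S)`. A surviving clique through a non-neighbour `v` of `u`
lies in `N[v]`; since a maximum clique of `G[N(u)]` loses at most `|S| ≤ k` vertices to `S` and can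
then be extended by `u`, `ω(G[N(u)]) < ω(G - S) + k`, and the hypothesis makes that clique smaller
than `ω(G - S)`. So some optimal deletion set contains `u`, and deleting `u` first leaves a budget
of `k - 1`.
-/

open SimpleGraph

/-- `theta G k` is the minimum, over all vertex subsets `S` with `|S| ≤ k`, of the
clique number of the subgraph of `G` induced on the complement of `S`. -/
noncomputable def theta {V : Type*} (G : SimpleGraph V) (k : ℕ) : ℕ :=
  sInf {m | ∃ S : Finset V, S.card ≤ k ∧ (G.induce ((↑S : Set V)ᶜ)).cliqueNum = m}

open Finset

namespace SimpleGraph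

variable {α β : Type*} {G : SimpleGraph α} {G' : SimpleGraph β}

theorem Embedding.cliqueNum_le [Finite β] (f : G ↪g G') : G.cliqueNum ≤ G'.cliqueNum := by
  obtain ⟨s, hs⟩ := G.exists_isNClique_cliqueNum
  have hclique : G'.IsClique (s.map f.toEmbedding : Set β) := by
    rw [coe_map]
    rintro _ ⟨x, hx, rfl⟩ _ ⟨y, hy, rfl⟩ hxy
    exact f.map_adj_iff.mpr (hs.isClique hx hy fun h => hxy (h ▸ rfl))
  simpa [hs.card_eq] using hclique.card_le_cliqueNum

theorem Iso.cliqueNum_eq [Finite β] (e : G ≃g G') : G.cliqueNum = G'.cliqueNum :=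
  have : Finite α := Finite.of_equiv _ e.toEquiv.symm
  le_antisymm e.toEmbedding.cliqueNum_le e.symm.toEmbedding.cliqueNum_le

theorem cliqueNum_induce_induce [Finite α] (s : Set α) (t : Set s) :
    ((G.induce s).induce t).cliqueNum = (G.induce (Subtype.val '' t)).cliqueNum := by
  let f : (G.induce s).induce t ↪g G := (Embedding.induce s).comp (Embedding.induce t)
  have hrange : Set.range f = Subtype.val '' t := by
    ext x
    constructor
    · rintro ⟨⟨y, hyt⟩, rfl⟩
      exact ⟨y, hyt, rfl⟩
    · rintro ⟨y, hyt, rfl⟩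
      exact ⟨⟨y, hyt⟩, rfl⟩
  rw [f.isoInduceRange.cliqueNum_eq, hrange]

theorem card_le_cliqueNum_induce [Finite α] {s : Set α} {t : Finset α} (hts : ↑t ⊆ s)
    (ht : G.IsClique (t : Set α)) : #t ≤ (G.induce s).cliqueNum := by
  classical
  have hlift : (t.subtype (· ∈ s)).map (Function.Embedding.subtype _) = t := by
    rw [subtype_map, filter_true_of_mem fun x hx => hts hx]
  have hclique : (G.induce s).IsNClique #t (t.subtype (· ∈ s)) := by
    rw [isNClique_induce_iff, hlift]
    exact ⟨ht, rfl⟩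
  exact hclique.card_eq ▸ hclique.isClique.card_le_cliqueNum

theorem exists_isNClique_cliqueNum_induce (s : Set α) :
    ∃ t : Finset α, ↑t ⊆ s ∧ G.IsNClique (G.induce s).cliqueNum t := by
  obtain ⟨t, ht⟩ := (G.induce s).exists_isNClique_cliqueNum
  rw [isNClique_induce_iff] at ht
  exact ⟨_, by simp, ht⟩

theorem cliqueNum_induce_le_of_forall {s : Set α} {m : ℕ}
    (h : ∀ t : Finset α, ↑t ⊆ s → G.IsClique (t : Set α) → #t ≤ m) :
    (G.induce s).cliqueNum ≤ m := by
  obtain ⟨t, hts, ht⟩ := G.exists_isNClique_cliqueNum_induce s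
  exact ht.card_eq ▸ h t hts ht.isClique

section Neighborhood

variable [Finite α] [DecidableEq α] {u : α} {S : Finset α}

theorem card_le_cliqueNum_neighborSet_add_one {t : Finset α}
    {v : α} (ht : G.IsClique (t : Set α)) (hv : v ∈ t) :
    #t ≤ (G.induce (G.neighborSet v)).cliqueNum + 1 := by
  have hsub : (↑(t.erase v) : Set α) ⊆ G.neighborSet v := by
    intro x hx
    rw [coe_erase] at hx
    exact ht hv hx.1 (Ne.symm hx.2)
  have := card_le_cliqueNum_induce hsub (ht.subset (by simp))
  rw [card_erase_of_mem hv] at this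
  omega

theorem card_lt_cliqueNum_induce_compl_add_card_inter (huS : u ∉ S) {K : Finset α}
    (hK : G.IsClique (K : Set α)) (hKu : ∀ x ∈ K, G.Adj u x) :
    #K < (G.induce (↑S : Set α)ᶜ).cliqueNum + #(K ∩ S) := by
  have hu : u ∉ K \ S := fun hu => G.irrefl (hKu u (mem_sdiff.1 hu).1)
  have hclique : G.IsClique (↑(insert u (K \ S)) : Set α) := by
    rw [coe_insert]
    exact (hK.subset (by simp)).insert fun x hx _ => hKu x (mem_sdiff.1 hx).1
  have hsub : (↑(insert u (K \ S)) : Set α) ⊆ (↑S)ᶜ := by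
    intro x hx
    rcases mem_insert.1 hx with rfl | hx
    · exact huS
    · exact (mem_sdiff.1 hx).2
  have hcard := card_le_cliqueNum_induce hsub hclique
  rw [card_insert_of_notMem hu] at hcard
  have := card_sdiff_add_card_inter K S
  omega

theorem cliqueNum_neighborSet_lt_cliqueNum_induce_compl_add_card (huS : u ∉ S) :
    (G.induce (G.neighborSet u)).cliqueNum < (G.induce (↑S : Set α)ᶜ).cliqueNum + #S := by
  obtain ⟨t, hts, ht⟩ := G.exists_isNClique_cliqueNum_induce (G.neighborSet u)
  rw [← ht.card_eq]
  calc #t < (G.induce (↑S : Set α)ᶜ).cliqueNum + #(t ∩ S) :=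
        card_lt_cliqueNum_induce_compl_add_card_inter huS ht.isClique fun x hx => hts hx
    _ ≤ (G.induce (↑S : Set α)ᶜ).cliqueNum + #S := by grw [inter_subset_right]

theorem exists_mem_card_le_cliqueNum_induce_compl_le {k : ℕ} (hk : 0 < k)
    (hu : ∀ v, v ≠ u → ¬G.Adj u v →
      (G.induce (G.neighborSet v)).cliqueNum + k < (G.induce (G.neighborSet u)).cliqueNum)
    (hS : #S ≤ k) :
    ∃ S' : Finset α, u ∈ S' ∧ #S' ≤ k ∧
      (G.induce (↑S' : Set α)ᶜ).cliqueNum ≤ (G.induce (↑S : Set α)ᶜ).cliqueNum := by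
  by_cases huS : u ∈ S
  · exact ⟨S, huS, hS, le_rfl⟩
  obtain ⟨T, hTS, hT⟩ := exists_subset_card_eq (min_le_right (k - 1) #S)
  refine ⟨insert u T, mem_insert_self _ _, (card_insert_le _ _).trans (by omega), ?_⟩
  refine cliqueNum_induce_le_of_forall fun K hK hKclique => ?_
  have hKuT : ∀ x ∈ K, x ≠ u ∧ x ∉ T := fun x hx => by simpa using hK hx
  by_cases hKu : ∀ x ∈ K, G.Adj u x
  · have hKS : #(K ∩ S) ≤ 1 := by
      have hsub : K ∩ S ⊆ S \ T := fun x hx =>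
        mem_sdiff.2 ⟨(mem_inter.1 hx).2, (hKuT x (mem_inter.1 hx).1).2⟩
      grw [hsub, card_sdiff_of_subset hTS]
      omega
    have := card_lt_cliqueNum_induce_compl_add_card_inter huS hKclique hKu
    omega
  · push Not at hKu
    obtain ⟨v, hvK, hvu⟩ := hKu
    have hKv := card_le_cliqueNum_neighborSet_add_one hKclique hvK
    have hv := hu v (hKuT v hvK).1 hvu
    have hNu := cliqueNum_neighborSet_lt_cliqueNum_induce_compl_add_card (G := G) huS
    omega

end Neighborhood

end SimpleGraph

section Theta

variable {V : Type*} (G : SimpleGraph V)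

noncomputable def thetaContaining (u : V) (k : ℕ) : ℕ :=
  sInf {m | ∃ S : Finset V, u ∈ S ∧ #S ≤ k ∧ (G.induce (↑S : Set V)ᶜ).cliqueNum = m}

theorem exists_card_le_cliqueNum_eq_theta (k : ℕ) :
    ∃ S : Finset V, #S ≤ k ∧ (G.induce (↑S : Set V)ᶜ).cliqueNum = theta G k :=
  Nat.sInf_mem (s := {m | ∃ S : Finset V, #S ≤ k ∧ (G.induce (↑S : Set V)ᶜ).cliqueNum = m})
    ⟨_, ∅, by simp, rfl⟩

theorem theta_induce_compl_singleton [Finite V] (u : V) (j : ℕ) :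
    theta (G.induce {u}ᶜ) j = thetaContaining G u (j + 1) := by
  classical
  unfold theta thetaContaining
  congr 1
  ext m
  constructor
  · rintro ⟨T, hT, rfl⟩
    let S := insert u (T.map (Function.Embedding.subtype _))
    have hS : Subtype.val '' (↑T : Set ({u}ᶜ : Set V))ᶜ = (↑S : Set V)ᶜ := by
      ext x
      by_cases hx : x = u <;> simp [S, hx]
    refine ⟨S, mem_insert_self _ _, (card_insert_le _ _).trans (by simpa using hT), ?_⟩
    rw [cliqueNum_induce_induce, hS]
  · rintro ⟨S, huS, hS, rfl⟩
    let T := S.subtype (· ∈ ({u}ᶜ : Set V))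
    have hT : Subtype.val '' (↑T : Set ({u}ᶜ : Set V))ᶜ = (↑S : Set V)ᶜ := by
      ext x
      by_cases hx : x = u <;> simp [T, hx, huS]
    refine ⟨T, ?_, by rw [cliqueNum_induce_induce, hT]⟩
    simp only [T, card_subtype, Set.mem_compl_iff, Set.mem_singleton_iff, filter_ne',
      card_erase_of_mem huS]
    omega

theorem theta_eq_thetaContaining {u : V} {k : ℕ}
    (h : ∀ S : Finset V, #S ≤ k → ∃ S' : Finset V, u ∈ S' ∧ #S' ≤ k ∧
      (G.induce (↑S' : Set V)ᶜ).cliqueNum ≤ (G.induce (↑S : Set V)ᶜ).cliqueNum) :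
    theta G k = thetaContaining G u k := by
  apply le_antisymm
  · obtain ⟨S, huS, hS, -⟩ := h ∅ (by simp)
    refine csInf_le_csInf (OrderBot.bddBelow _) ?_ fun m ⟨S, _, hS, hm⟩ => ⟨S, hS, hm⟩
    exact ⟨_, S, huS, hS, rfl⟩
  · obtain ⟨S, hS, hθ⟩ := exists_card_le_cliqueNum_eq_theta G k
    obtain ⟨S', huS', hS', hle⟩ := h S hS
    calc thetaContaining G u k ≤ (G.induce (↑S' : Set V)ᶜ).cliqueNum :=
          Nat.sInf_le ⟨S', huS', hS', rfl⟩
      _ ≤ (G.induce (↑S : Set V)ᶜ).cliqueNum := hle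
      _ = theta G k := hθ

end Theta

theorem interdiction_reduction {V : Type*} [Fintype V] (G : SimpleGraph V) (k : ℕ)
    (hk : 0 < k) (u : V)
    (h : ∀ v : V, v ∉ insert u (G.neighborSet u) →
      ((G.induce (G.neighborSet u)).cliqueNum : ℤ) - (k : ℤ) >
        ((G.induce (G.neighborSet v)).cliqueNum : ℤ)) :
    theta G k = theta (G.induce ({u}ᶜ : Set V)) (k - 1) := by
  classical
  have hu : ∀ v, v ≠ u → ¬G.Adj u v →
      (G.induce (G.neighborSet v)).cliqueNum + k < (G.induce (G.neighborSet u)).cliqueNum :=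
    fun v hvu hadj => by
      have := h v (by simp [hvu, hadj])
      omega
  rw [theta_induce_compl_singleton, Nat.sub_add_cancel hk]
  exact theta_eq_thetaContaining G fun S hS => exists_mem_card_le_cliqueNum_induce_compl_le hk hu hS
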